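/- Let a, b ∈ ℂ with b ≠ −1, let j ∈ ℤ, and let φ be a ½-derivation of the deformative Schrödinger–Witt algebra 𝒲(a,b,1/2) such that for every m ∈ ℤ the elements φ(L_m) and φ(I_m) lie in the span of {Y_{m+j}} and φ(Y_m) lies in the span of {L_{m+j+1}, I_{m+j+1}}. Then φ = 0. -/

import Mathlib

/-- Basis of the deformative Schrödinger–Witt algebra 𝒲(a,b,1/2):
`L m`, `I m`, and `Y m` (the latter denotes `Y_{m+1/2}`). -/
inductive SWBasis : Type
  | L : ℤ → SWBasis
  | I : ℤ → SWBasis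
  | Y : ℤ → SWBasis

/-- Underlying vector space of 𝒲(a,b,1/2): the free ℂ-module on `SWBasis`. -/
abbrev SW : Type := SWBasis →₀ ℂ

noncomputable def Lb (m : ℤ) : SW := Finsupp.single (SWBasis.L m) 1
noncomputable def Ib (m : ℤ) : SW := Finsupp.single (SWBasis.I m) 1
noncomputable def Yb (m : ℤ) : SW := Finsupp.single (SWBasis.Y m) 1

/-- The Lie bracket of 𝒲(a,b,1/2) on basis elements. -/
noncomputable def swBracketBasis (a b : ℂ) : SWBasis → SWBasis → SW
  | SWBasis.L m, SWBasis.L n => ((n : ℂ) - (m : ℂ)) • Lb (m + n)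
  | SWBasis.L m, SWBasis.I n => ((n : ℂ) + b * (m : ℂ) + a) • Ib (m + n)
  | SWBasis.I m, SWBasis.L n => -(((m : ℂ) + b * (n : ℂ) + a) • Ib (n + m))
  | SWBasis.L m, SWBasis.Y n =>
      ((n : ℂ) + 1 / 2 + ((b - 1) * (m : ℂ) + a) / 2) • Yb (m + n)
  | SWBasis.Y m, SWBasis.L n =>
      -(((m : ℂ) + 1 / 2 + ((b - 1) * (n : ℂ) + a) / 2) • Yb (n + m))
  | SWBasis.Y m, SWBasis.Y n => ((n : ℂ) - (m : ℂ)) • Ib (m + n + 1)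
  | _, _ => 0

/-- The Lie bracket of 𝒲(a,b,1/2), extended bilinearly from the basis. -/
noncomputable def swBracket (a b : ℂ) : SW →ₗ[ℂ] SW →ₗ[ℂ] SW :=
  Finsupp.lift (SW →ₗ[ℂ] SW) ℂ SWBasis fun x =>
    Finsupp.lift SW ℂ SWBasis fun y => swBracketBasis a b x y

/-- `φ` is a ½-derivation of 𝒲(a,b,1/2). -/
def IsHalfDerivationSW (a b : ℂ) (φ : SW →ₗ[ℂ] SW) : Prop :=
  ∀ x y : SW, φ (swBracket a b x y) =
    (1 / 2 : ℂ) • (swBracket a b (φ x) y + swBracket a b x (φ y))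

lemma swBracket_single (a b : ℂ) (x y : SWBasis) :
    swBracket a b (Finsupp.single x 1) (Finsupp.single y 1) = swBracketBasis a b x y := by
  simp [swBracket, Finsupp.lift_apply, Finsupp.sum_single_index]

lemma br_smul_left (a b : ℂ) (c : ℂ) (x y : SW) :
    swBracket a b (c • x) y = c • swBracket a b x y := by
  simp [map_smul]

lemma br_smul_right (a b : ℂ) (c : ℂ) (x y : SW) :
    swBracket a b x (c • y) = c • swBracket a b x y := map_smul _ _ _

lemma br_add_right (a b : ℂ) (x y z : SW) :
    swBracket a b x (y + z) = swBracket a b x y + swBracket a b x z := map_add _ _ _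

lemma br_add_left (a b : ℂ) (x y z : SW) :
    swBracket a b (x + y) z = swBracket a b x z + swBracket a b y z := by
  simp [map_add]

lemma br_LL (a b : ℂ) (m n k : ℤ) (h : m + n = k) :
    swBracket a b (Lb m) (Lb n) = ((n : ℂ) - m) • Lb k := by
  subst h; exact swBracket_single a b _ _

lemma br_LI (a b : ℂ) (m n k : ℤ) (h : m + n = k) :
    swBracket a b (Lb m) (Ib n) = ((n : ℂ) + b * m + a) • Ib k := by
  subst h; exact swBracket_single a b _ _

lemma br_IL (a b : ℂ) (m n k : ℤ) (h : n + m = k) :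
    swBracket a b (Ib m) (Lb n) = -(((m : ℂ) + b * n + a) • Ib k) := by
  subst h; exact swBracket_single a b _ _

lemma br_LY (a b : ℂ) (m n k : ℤ) (h : m + n = k) :
    swBracket a b (Lb m) (Yb n) =
      ((n : ℂ) + 1 / 2 + ((b - 1) * m + a) / 2) • Yb k := by
  subst h; exact swBracket_single a b _ _

lemma br_YL (a b : ℂ) (m n k : ℤ) (h : n + m = k) :
    swBracket a b (Yb m) (Lb n) =
      -(((m : ℂ) + 1 / 2 + ((b - 1) * n + a) / 2) • Yb k) := by
  subst h; exact swBracket_single a b _ _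

lemma br_YY (a b : ℂ) (m n k : ℤ) (h : m + n + 1 = k) :
    swBracket a b (Yb m) (Yb n) = ((n : ℂ) - m) • Ib k := by
  subst h; exact swBracket_single a b _ _

lemma br_II (a b : ℂ) (m n : ℤ) : swBracket a b (Ib m) (Ib n) = 0 :=
  swBracket_single a b _ _

lemma br_IY (a b : ℂ) (m n : ℤ) : swBracket a b (Ib m) (Yb n) = 0 :=
  swBracket_single a b _ _

lemma br_YI (a b : ℂ) (m n : ℤ) : swBracket a b (Yb m) (Ib n) = 0 :=
  swBracket_single a b _ _

/-- a homogeneous ½-derivation of 𝒲(a,b,1/2) (b ≠ −1) of degree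
j + 1/2 is zero. -/
theorem stmt2 (a b : ℂ) (hb : b ≠ -1) (j : ℤ) (φ : SW →ₗ[ℂ] SW)
    (hφ : IsHalfDerivationSW a b φ)
    (hL : ∀ m : ℤ, φ (Lb m) ∈ Submodule.span ℂ ({Yb (m + j)} : Set SW))
    (hI : ∀ m : ℤ, φ (Ib m) ∈ Submodule.span ℂ ({Yb (m + j)} : Set SW))
    (hY : ∀ m : ℤ, φ (Yb m) ∈ Submodule.span ℂ ({Lb (m + j + 1), Ib (m + j + 1)} : Set SW)) :
    φ = 0 := by
  classical
  choose f hf using fun m => Submodule.mem_span_singleton.1 (hL m)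
  choose g hg using fun m => Submodule.mem_span_singleton.1 (hI m)
  choose p q hpq using fun m => Submodule.mem_span_pair.1 (hY m)
  -- Equation from [L_m, L_n]
  have EQLL : ∀ m n : ℤ, 2 * ((n:ℂ) - m) * f (m+n) =
      -(f m * ((m:ℂ) + j + 1/2 + ((b-1)*n + a)/2)) +
        f n * ((n:ℂ) + j + 1/2 + ((b-1)*m + a)/2) := by
    intro m n
    have h := hφ (Lb m) (Lb n)
    rw [br_LL a b m n (m+n) rfl, map_smul, ← hf (m+n), ← hf m, ← hf n,
      br_smul_left, br_smul_right,
      br_YL a b (m+j) n (m+n+j) (by omega),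
      br_LY a b m (n+j) (m+n+j) (by omega)] at h
    have h2 := DFunLike.congr_fun h (SWBasis.Y (m+n+j))
    simp [Yb, Finsupp.single_apply, smul_smul] at h2
    push_cast at h2 ⊢
    linear_combination 2 * h2
  -- Equation from [L_m, I_n]
  have EQg : ∀ m n : ℤ, 2 * ((n:ℂ) + b*m + a) * g (m+n) =
      g n * ((n:ℂ) + j + 1/2 + ((b-1)*m + a)/2) := by
    intro m n
    have h := hφ (Lb m) (Ib n)
    rw [br_LI a b m n (m+n) rfl, map_smul, ← hg (m+n), ← hf m, ← hg n,
      br_smul_left, br_smul_right, br_YI,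
      br_LY a b m (n+j) (m+n+j) (by omega)] at h
    have h2 := DFunLike.congr_fun h (SWBasis.Y (m+n+j))
    simp [Yb, Finsupp.single_apply, smul_smul] at h2
    push_cast at h2 ⊢
    linear_combination 2 * h2
  -- Equation from [I_m, Y_n] = 0
  have EQstar : ∀ m n : ℤ, 0 =
      g m * ((n:ℂ) - m - j) - p n * ((m:ℂ) + b*((n:ℂ) + j + 1) + a) := by
    intro m n
    have h := hφ (Ib m) (Yb n)
    rw [br_IY, map_zero, ← hg m, ← hpq n,
      br_smul_left, br_add_right, br_smul_right, br_smul_right,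
      br_YY a b (m+j) n (m+n+j+1) (by omega),
      br_IL a b m (n+j+1) (m+n+j+1) (by omega), br_II] at h
    have h2 := DFunLike.congr_fun h (SWBasis.I (m+n+j+1))
    simp [Ib, Finsupp.single_apply, smul_smul] at h2
    push_cast at h2 ⊢
    linear_combination 2 * h2
  -- Equations from [L_m, Y_n]
  have EQLY : ∀ m n : ℤ,
      2 * ((n:ℂ) + 1/2 + ((b-1)*m + a)/2) * p (m+n) = p n * ((n:ℂ) + j + 1 - m) ∧
      2 * ((n:ℂ) + 1/2 + ((b-1)*m + a)/2) * q (m+n) =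
        f m * ((n:ℂ) - m - j) + q n * ((n:ℂ) + j + 1 + b*m + a) := by
    intro m n
    have h := hφ (Lb m) (Yb n)
    rw [br_LY a b m n (m+n) rfl, map_smul, ← hpq (m+n), ← hf m, ← hpq n,
      br_smul_left, br_add_right, br_smul_right, br_smul_right,
      br_YY a b (m+j) n (m+n+j+1) (by omega),
      br_LL a b m (n+j+1) (m+n+j+1) (by omega),
      br_LI a b m (n+j+1) (m+n+j+1) (by omega)] at h
    constructor
    · have h2 := DFunLike.congr_fun h (SWBasis.L (m+n+j+1))
      simp [Lb, Ib, Yb, Finsupp.single_apply, smul_smul] at h2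
      push_cast at h2 ⊢
      linear_combination 2 * h2
    · have h2 := DFunLike.congr_fun h (SWBasis.I (m+n+j+1))
      simp [Lb, Ib, Yb, Finsupp.single_apply, smul_smul] at h2
      push_cast at h2 ⊢
      linear_combination 2 * h2
  -- Step A: g vanishes away from the (at most one) exceptional point
  have hgA : ∀ n : ℤ, 2*(n:ℂ) + 3*a - 2*(j:ℂ) - 1 ≠ 0 → g n = 0 := by
    intro n hn
    have h := EQg 0 n
    simp only [zero_add] at h
    push_cast at h
    have key : g n * (2*(n:ℂ) + 3*a - 2*(j:ℂ) - 1) = 0 := by linear_combination 2 * h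
    rcases mul_eq_zero.1 key with h' | h'
    · exact h'
    · exact absurd h' hn
  have uniq : ∀ m₁ m₂ : ℤ, 2*(m₁:ℂ) + 3*a - 2*(j:ℂ) - 1 = 0 →
      2*(m₂:ℂ) + 3*a - 2*(j:ℂ) - 1 = 0 → m₁ = m₂ := by
    intro m₁ m₂ h1 h2
    have : (m₁:ℂ) = m₂ := by linear_combination (h1 - h2)/2
    exact_mod_cast this
  have hex : ∃ m₀ : ℤ, g m₀ = 0 ∧ g (m₀+1) = 0 := by
    by_cases h0 : 2*((0:ℤ):ℂ) + 3*a - 2*(j:ℂ) - 1 = 0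
    · exact ⟨1, hgA 1 (fun h => by have := uniq 1 0 h h0; omega),
        hgA (1+1) (fun h => by have := uniq (1+1) 0 h h0; omega)⟩
    · by_cases h1 : 2*((1:ℤ):ℂ) + 3*a - 2*(j:ℂ) - 1 = 0
      · exact ⟨2, hgA 2 (fun h => by have := uniq 2 1 h h1; omega),
          hgA (2+1) (fun h => by have := uniq (2+1) 1 h h1; omega)⟩
      · exact ⟨0, hgA 0 h0, hgA (0+1) (fun h => h1 (by push_cast at h ⊢; linear_combination h))⟩
  -- Step B: p ≡ 0
  have hp : ∀ n : ℤ, p n = 0 := by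
    obtain ⟨m₀, hm1, hm2⟩ := hex
    intro n
    have e1 := EQstar m₀ n
    have e2 := EQstar (m₀+1) n
    rw [hm1] at e1
    rw [hm2] at e2
    push_cast at e1 e2
    linear_combination e2 - e1
  -- Step C: g ≡ 0
  have hgz : ∀ m : ℤ, g m = 0 := by
    intro m
    have e := EQstar m (m+j+1)
    rw [hp (m+j+1)] at e
    push_cast at e
    linear_combination -e
  -- Step D: q n = f 0 for n ≠ j
  have hqD : ∀ n : ℤ, n ≠ j → q n = f 0 := by
    intro n hn
    have h := (EQLY 0 n).2
    simp only [zero_add] at h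
    push_cast at h
    have key : (q n - f 0) * ((n:ℂ) - (j:ℂ)) = 0 := by linear_combination h
    have hne : ((n:ℂ) - (j:ℂ)) ≠ 0 := by
      have h0 : ((n - j : ℤ):ℂ) ≠ 0 := Int.cast_ne_zero.mpr (by omega)
      push_cast at h0; exact h0
    exact sub_eq_zero.1 ((mul_eq_zero.1 key).resolve_right hne)
  -- Step E: f is constant
  have hfE : ∀ m : ℤ, f m = f 0 := by
    intro m
    set n : ℤ := j + m.natAbs + 1 with hdefn
    have h := (EQLY m n).2
    rw [hqD n (by omega), hqD (m+n) (by omega)] at h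
    push_cast at h
    have key : (f m - f 0) * ((n:ℂ) - (m:ℂ) - (j:ℂ)) = 0 := by linear_combination -h
    have hne : ((n:ℂ) - (m:ℂ) - (j:ℂ)) ≠ 0 := by
      have h0 : ((n - m - j : ℤ):ℂ) ≠ 0 := Int.cast_ne_zero.mpr (by omega)
      push_cast at h0; exact h0
    exact sub_eq_zero.1 ((mul_eq_zero.1 key).resolve_right hne)
  -- Step F: f 0 = 0
  have hf0 : f 0 = 0 := by
    have h := EQLL 0 1
    simp only [zero_add] at h
    rw [hfE 1] at h
    push_cast at h
    have key : f 0 * (b + 1) = 0 := by linear_combination 2 * h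
    have hb1 : b + 1 ≠ 0 := fun h' => hb (by linear_combination h')
    exact (mul_eq_zero.1 key).resolve_right hb1
  have hfz : ∀ m : ℤ, f m = 0 := fun m => (hfE m).trans hf0
  have hqz' : ∀ n : ℤ, n ≠ j → q n = 0 := fun n hn => (hqD n hn).trans hf0
  -- Step G: q j = 0
  have hqj : q j = 0 := by
    have h1 := (EQLY 1 j).2
    have h3 := (EQLY 1 (j-1)).2
    rw [hqz' (1+j) (by omega), hfz 1] at h1
    rw [show (1:ℤ)+(j-1) = j by ring, hqz' (j-1) (by omega), hfz 1] at h3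
    push_cast at h1 h3
    by_cases hq : q j = 0
    · exact hq
    · exfalso
      have hX1 : 2*(j:ℂ) + 1 + b + a = 0 := by
        have h' : q j * (2*(j:ℂ) + 1 + b + a) = 0 := by linear_combination -h1
        exact (mul_eq_zero.1 h').resolve_left hq
      have hc : q j * (-3 : ℂ) = 0 := by linear_combination h3 - q j * hX1
      exact hq (by linear_combination -hc/3)
  have hqz : ∀ n : ℤ, q n = 0 := by
    intro n
    by_cases hn : n = j
    · rw [hn]; exact hqj
    · exact hqz' n hn
  -- Conclusion
  have key : ∀ s : SWBasis, φ (Finsupp.single s 1) = 0 := by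
    rintro (m | m | m)
    · rw [show Finsupp.single (SWBasis.L m) (1:ℂ) = Lb m from rfl, ← hf m, hfz, zero_smul]
    · rw [show Finsupp.single (SWBasis.I m) (1:ℂ) = Ib m from rfl, ← hg m, hgz, zero_smul]
    · rw [show Finsupp.single (SWBasis.Y m) (1:ℂ) = Yb m from rfl, ← hpq m, hp, hqz,
        zero_smul, zero_smul, add_zero]
  refine LinearMap.ext fun x => ?_
  induction x using Finsupp.induction_linear with
  | zero => simp
  | add x y hx hy => simp [hx, hy]
  | single s c =>
    have h' : Finsupp.single s c = c • Finsupp.single s (1:ℂ) := by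
      rw [Finsupp.smul_single, smul_eq_mul, mul_one]
    rw [h', map_smul, key s, smul_zero]
    simp
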